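/- arXiv:0711.4427 — 5 statements merged into one kernel-verified Lean document; each statement's English description precedes it below -/
import Mathlib

section
/- Let A be a nonempty subset of the finite field F_q. Then there exist a set P of points in F_q^2 with |P| = |A+A|·|A·A| and a set L of lines in F_q^2 with |L| = |A|^2 such that the number of incidences between P and L is at least |A|^3. -/
/-!
Each pair `(a, b) ∈ A²` gives the line `y = b (x - a)`, which passes through the `|A|` points
`(a + c, b c)`, `c ∈ A`, of `(A + A) × (A · A)`. For `b = 0` these lines all collapse to the
`x`-axis, so they are replaced by the vertical lines `x = a + a₀` for a fixed `a₀ ∈ A`; each of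
those contains the `|A · A| ≥ |A|` points `(a + a₀, y)`, `y ∈ A · A`.
-/

open Pointwise

open Finset

theorem card_incidences_eq_sum {α : Type*} [DecidableEq α] (P : Finset α)
    (L : Finset (Finset α)) :
    #((P ×ˢ L).filter fun pl => pl.1 ∈ pl.2) = ∑ l ∈ L, #(P.filter (· ∈ l)) := by
  simp only [card_filter, sum_product_right]

namespace Elekes

variable {F : Type*} [Fintype F] [DecidableEq F]

def verticalLine (s : F) : Finset (F × F) := univ.filter fun p => p.1 = s

@[simp] theorem mem_verticalLine {s : F} {p : F × F} : p ∈ verticalLine s ↔ p.1 = s := by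
  simp [verticalLine]

theorem card_filter_mem_verticalLine (S T : Finset F) {s : F} (hs : s ∈ S) :
    #((S ×ˢ T).filter (· ∈ verticalLine s)) = #T := by
  have : (S ×ˢ T).filter (· ∈ verticalLine s) = {s} ×ˢ T := by
    ext ⟨x, y⟩
    simp only [mem_filter, mem_product, mem_verticalLine, mem_singleton]
    constructor
    · rintro ⟨⟨-, hy⟩, rfl⟩
      exact ⟨rfl, hy⟩
    · rintro ⟨rfl, hy⟩
      exact ⟨⟨hs, hy⟩, rfl⟩
  rw [this, card_product, card_singleton, one_mul]

variable [Field F]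

def IsAffineLine (l : Finset (F × F)) : Prop :=
  ∃ a b c : F, (a, b) ≠ (0, 0) ∧ l = univ.filter fun p : F × F => a * p.1 + b * p.2 = c

def slopeLine (a b : F) : Finset (F × F) := univ.filter fun p => p.2 = b * (p.1 - a)

@[simp] theorem mem_slopeLine {a b : F} {p : F × F} :
    p ∈ slopeLine a b ↔ p.2 = b * (p.1 - a) := by
  simp [slopeLine]

theorem isAffineLine_verticalLine (s : F) : IsAffineLine (verticalLine s) :=
  ⟨1, 0, s, by simp, by ext; simp⟩

theorem isAffineLine_slopeLine (a b : F) : IsAffineLine (slopeLine a b) := by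
  refine ⟨b, -1, b * a, by simp, ?_⟩
  ext p
  simp only [mem_slopeLine, mem_filter, mem_univ, true_and]
  constructor <;> intro h <;> linear_combination -h

theorem verticalLine_injective : Function.Injective (verticalLine : F → Finset (F × F)) := by
  intro s t h
  have : ((s, 0) : F × F) ∈ verticalLine t := h ▸ mem_verticalLine.2 rfl
  exact mem_verticalLine.1 this

theorem slopeLine_ne_verticalLine (a b s : F) : slopeLine a b ≠ verticalLine s := by
  intro h
  have h₀ : ((s, b * (s - a)) : F × F) ∈ slopeLine a b := mem_slopeLine.2 rfl
  have h₁ : ((s, b * (s - a) + 1) : F × F) ∈ slopeLine a b := h ▸ mem_verticalLine.2 rfl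
  rw [mem_slopeLine] at h₀ h₁
  simp at h₁

theorem slopeLine_inj {a b a' b' : F} (hb : b ≠ 0) (h : slopeLine a b = slopeLine a' b') :
    a = a' ∧ b = b' := by
  have h₀ : ((a, 0) : F × F) ∈ slopeLine a' b' := h ▸ mem_slopeLine.2 (by simp)
  have h₁ : ((a + 1, b) : F × F) ∈ slopeLine a' b' := h ▸ mem_slopeLine.2 (by ring)
  rw [mem_slopeLine] at h₀ h₁
  have hbb : b = b' := by linear_combination h₁ - h₀
  subst hbb
  exact ⟨sub_eq_zero.1 ((mul_eq_zero.1 h₀.symm).resolve_left hb), rfl⟩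

def elekesLine (a₀ a b : F) : Finset (F × F) :=
  if b = 0 then verticalLine (a + a₀) else slopeLine a b

theorem isAffineLine_elekesLine (a₀ a b : F) : IsAffineLine (elekesLine a₀ a b) := by
  unfold elekesLine
  split_ifs
  exacts [isAffineLine_verticalLine _, isAffineLine_slopeLine _ _]

theorem elekesLine_injective (a₀ : F) :
    Function.Injective fun x : F × F => elekesLine a₀ x.1 x.2 := by
  rintro ⟨a, b⟩ ⟨a', b'⟩ h
  simp only [elekesLine] at h
  split_ifs at h with hb hb'
  · simp [hb, hb', add_right_cancel (verticalLine_injective h)]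
  · exact absurd h.symm (slopeLine_ne_verticalLine _ _ _)
  · exact absurd h (slopeLine_ne_verticalLine _ _ _)
  · obtain ⟨rfl, rfl⟩ := slopeLine_inj hb h
    rfl

theorem card_le_card_filter_mem_slopeLine {A : Finset F} {a b : F} (ha : a ∈ A) (hb : b ∈ A)
    (hb₀ : b ≠ 0) : #A ≤ #(((A + A) ×ˢ (A * A)).filter (· ∈ slopeLine a b)) := by
  refine card_le_card_of_injOn (fun c => (a + c, b * c)) (fun c hc => ?_) ?_
  · simp only [coe_filter, Set.mem_ofPred_eq, mem_product, mem_slopeLine]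
    exact ⟨⟨add_mem_add ha hc, mul_mem_mul hb hc⟩, by ring⟩
  · intro c _ c' _ h
    exact mul_left_cancel₀ hb₀ (Prod.ext_iff.1 h).2

theorem card_le_card_filter_mem_elekesLine {A : Finset F} {a₀ a b : F} (ha₀ : a₀ ∈ A)
    (ha : a ∈ A) (hb : b ∈ A) :
    #A ≤ #(((A + A) ×ˢ (A * A)).filter (· ∈ elekesLine a₀ a b)) := by
  unfold elekesLine
  split_ifs with hb₀
  · rw [card_filter_mem_verticalLine _ _ (add_mem_add ha ha₀)]
    exact card_le_card_mul_self₀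
  · exact card_le_card_filter_mem_slopeLine ha hb hb₀

end Elekes

open Elekes in
/-- Elekes' construction: for `A ⊆ F_q` nonempty there are `|A+A||A·A|` points and `|A|²`
lines with at least `|A|³` incidences. -/
theorem elekes_construction {F : Type*} [Field F] [Fintype F] [DecidableEq F]
    (A : Finset F) (hA : A.Nonempty) :
    ∃ (P : Finset (F × F)) (L : Finset (Finset (F × F))),
      (∀ l ∈ L, ∃ a b c : F, (a, b) ≠ (0, 0) ∧
        l = Finset.univ.filter (fun p : F × F => a * p.1 + b * p.2 = c)) ∧
      P.card = (A + A).card * (A * A).card ∧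
      L.card = A.card ^ 2 ∧
      A.card ^ 3 ≤ ((P ×ˢ L).filter (fun pl => pl.1 ∈ pl.2)).card := by
  obtain ⟨a₀, ha₀⟩ := hA
  have hinj := elekesLine_injective a₀
  refine ⟨(A + A) ×ˢ (A * A), (A ×ˢ A).image fun x => elekesLine a₀ x.1 x.2, ?_,
    card_product _ _, ?_, ?_⟩
  · simp only [forall_mem_image]
    exact fun x _ => isAffineLine_elekesLine a₀ x.1 x.2
  · rw [card_image_of_injective _ hinj, card_product, sq]
  · rw [card_incidences_eq_sum, sum_image hinj.injOn]
    calc #A ^ 3 = ∑ _x ∈ A ×ˢ A, #A := by rw [sum_const, card_product, smul_eq_mul]; ring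
      _ ≤ _ := sum_le_sum fun x hx =>
        card_le_card_filter_mem_elekesLine ha₀ (mem_product.1 hx).1 (mem_product.1 hx).2
end

section
/- Let A be a nonempty subset of F_q, q an odd prime power, with m = |A+A| and n = |A·A|. Then |A|^2 ≤ mn|A|/q + q^{1/2}·√(mn). -/
/-!
For `a, b ∈ A` the line `ℓ_{a,b} : y = b (x - a)` contains the `|A|` points `(a + c, b c)`,
`c ∈ A`, of `P = (A + A) × (A · A)` (for `b = 0` take the vertical line `x = a` instead, which
meets `P` in `|A · A| ≥ |A|` points). So the `|A|²` lines `ℓ_{a,b}` have at least `|A|³`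
incidences with `P`. On the other hand, every point lies on `q + 1` lines and two distinct points
on exactly one, which pins down the second moment of the number of points of `P` on a line;
Cauchy–Schwarz then gives Vinh's bound `I(P, L) ≤ |P| |L| / q + √(q |P| |L|)`. Dividing by `|A|`
yields the estimate.
-/

open Finset
open scoped Pointwise

lemma sum_le_card_mul_add_sqrt {ι : Type*} [Fintype ι] (f : ι → ℝ) {μ V : ℝ}
    (hV : ∑ i, (f i - μ) ^ 2 ≤ V) (s : Finset ι) :
    ∑ i ∈ s, f i ≤ #s * μ + √(#s * V) := by
  have hcs : (∑ i ∈ s, (f i - μ)) ^ 2 ≤ #s * V :=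
    calc _ ≤ #s * ∑ i ∈ s, (f i - μ) ^ 2 := sq_sum_le_card_mul_sum_sq
      _ ≤ #s * V := by
        gcongr
        exact (sum_le_univ_sum_of_nonneg fun i => sq_nonneg _).trans hV
  have := le_abs_self _ |>.trans (Real.abs_le_sqrt hcs)
  rw [sum_sub_distrib, sum_const, nsmul_eq_mul] at this
  linarith

/-- `inl (b, c)` is the line `y = b * x + c` and `inr a` is the vertical line `x = a`. -/
abbrev PlaneLine (F : Type*) := (F × F) ⊕ F

namespace PlaneLine

variable {F : Type*} [Field F]

def Incident (p : F × F) : PlaneLine F → Prop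
  | .inl (b, c) => p.2 = b * p.1 + c
  | .inr a => p.1 = a

@[simp] lemma incident_inl (p : F × F) (b c : F) : Incident p (.inl (b, c)) ↔ p.2 = b * p.1 + c :=
  Iff.rfl

@[simp] lemma incident_inr (p : F × F) (a : F) : Incident p (.inr a) ↔ p.1 = a := Iff.rfl

instance [DecidableEq F] (p : F × F) : DecidablePred (Incident p)
  | .inl (b, c) => inferInstanceAs (Decidable (p.2 = b * p.1 + c))
  | .inr a => inferInstanceAs (Decidable (p.1 = a))

lemma existsUnique_incident_of_ne {p p' : F × F} (h : p ≠ p') :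
    ∃! l : PlaneLine F, Incident p l ∧ Incident p' l := by
  by_cases hx : p.1 = p'.1
  · refine ⟨.inr p.1, ⟨rfl, hx.symm⟩, ?_⟩
    rintro (⟨b, c⟩ | a) ⟨h₁, h₂⟩
    · rw [incident_inl] at h₁ h₂
      exact absurd (Prod.ext hx (by rw [h₁, h₂, hx])) h
    · rw [incident_inr] at h₁
      rw [h₁]
  · have hne : p.1 - p'.1 ≠ 0 := sub_ne_zero.mpr hx
    set b₀ := (p.2 - p'.2) / (p.1 - p'.1)
    have hb₀ : b₀ * (p.1 - p'.1) = p.2 - p'.2 := div_mul_cancel₀ _ hne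
    refine ⟨.inl (b₀, p.2 - b₀ * p.1),
      ⟨by rw [incident_inl]; ring, by rw [incident_inl]; linear_combination hb₀⟩, ?_⟩
    rintro (⟨b, c⟩ | a) ⟨h₁, h₂⟩
    · rw [incident_inl] at h₁ h₂
      have hb : b = b₀ := eq_div_of_mul_eq hne (by linear_combination h₂ - h₁)
      subst hb
      rw [h₁, add_sub_cancel_left]
    · rw [incident_inr] at h₁ h₂
      exact absurd (h₁.trans h₂.symm) hx

section Counting

variable [Fintype F] [DecidableEq F]

lemma card_filter_incident (p : F × F) :
    #{l : PlaneLine F | Incident p l} = Fintype.card F + 1 := by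
  have key (b c : F) : p.2 = b * p.1 + c ↔ c = p.2 - b * p.1 := by
    rw [eq_sub_iff_add_eq, add_comm, eq_comm]
  rw [card_filter, Fintype.sum_sum_type, Fintype.sum_prod_type]
  simp [key]

lemma card_filter_incident_and_of_ne {p p' : F × F} (h : p ≠ p') :
    #{l : PlaneLine F | Incident p l ∧ Incident p' l} = 1 :=
  (Fintype.existsUnique_iff_card_one _).1 (existsUnique_incident_of_ne h)

lemma sum_card_incident (P : Finset (F × F)) :
    ∑ l : PlaneLine F, #{p ∈ P | Incident p l} = (Fintype.card F + 1) * #P := by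
  have := sum_card_bipartiteAbove_eq_sum_card_bipartiteBelow (s := P) (t := univ) (r := Incident)
  simp only [bipartiteAbove, bipartiteBelow, card_filter_incident] at this
  simp [← this, mul_comm]

lemma card_filter_incident_and (p p' : F × F) :
    #{l : PlaneLine F | Incident p l ∧ Incident p' l}
      = 1 + if p = p' then Fintype.card F else 0 := by
  split_ifs with h
  · simp [h, card_filter_incident, add_comm]
  · simp [card_filter_incident_and_of_ne h]

lemma sum_card_incident_sq (P : Finset (F × F)) :
    ∑ l : PlaneLine F, #{p ∈ P | Incident p l} ^ 2 = #P ^ 2 + Fintype.card F * #P := by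
  have hsq (l : PlaneLine F) : #{p ∈ P | Incident p l} ^ 2
      = #{pp ∈ P ×ˢ P | Incident pp.1 l ∧ Incident pp.2 l} := by
    rw [sq, ← card_product, ← filter_product]
  have := sum_card_bipartiteAbove_eq_sum_card_bipartiteBelow (s := P ×ˢ P) (t := univ)
    (r := fun pp l => Incident pp.1 l ∧ Incident pp.2 l)
  simp only [bipartiteAbove, bipartiteBelow, card_filter_incident_and] at this
  simp [hsq, ← this, sum_add_distrib, sum_product, sq, mul_comm]

lemma sum_sq_card_incident_sub_le (P : Finset (F × F)) :
    ∑ l : PlaneLine F, ((#{p ∈ P | Incident p l} : ℝ) - #P / Fintype.card F) ^ 2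
      ≤ Fintype.card F * #P := by
  have h₁ : ∑ l : PlaneLine F, (#{p ∈ P | Incident p l} : ℝ)
      = (Fintype.card F + 1) * #P := by
    exact_mod_cast sum_card_incident P
  have h₂ : ∑ l : PlaneLine F, (#{p ∈ P | Incident p l} : ℝ) ^ 2
      = #P ^ 2 + Fintype.card F * #P := by
    exact_mod_cast sum_card_incident_sq P
  have hN : (Fintype.card (PlaneLine F) : ℝ)
      = Fintype.card F * Fintype.card F + Fintype.card F := by
    simp [Fintype.card_sum, Fintype.card_prod]
  calc _ = Fintype.card F * #P - (#P : ℝ) ^ 2 / Fintype.card F := by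
        simp only [sub_sq, sum_add_distrib, sum_sub_distrib, ← sum_mul, h₁, h₂, sum_const,
          card_univ, nsmul_eq_mul, hN, mul_comm (2 : ℝ)]
        field_simp
        ring
    _ ≤ _ := sub_le_self _ (by positivity)

theorem sum_card_incident_le (P : Finset (F × F)) (L : Finset (PlaneLine F)) :
    ∑ l ∈ L, (#{p ∈ P | Incident p l} : ℝ)
      ≤ #P * #L / Fintype.card F + √(Fintype.card F * #P * #L) :=
  (sum_le_card_mul_add_sqrt _ (sum_sq_card_incident_sub_le P) L).trans_eq (by ring_nf)

end Counting

variable [DecidableEq F]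

/-- For `b ≠ 0` the line `y = b * (x - a)`, which contains `(a + c, b * c)` for every `c`;
for `b = 0` the vertical line `x = a` instead, so that `paramLine` stays injective. -/
def paramLine (ab : F × F) : PlaneLine F :=
  if ab.2 = 0 then .inr ab.1 else .inl (ab.2, -(ab.1 * ab.2))

lemma paramLine_injective : Function.Injective (paramLine (F := F)) := by
  rintro ⟨a, b⟩ ⟨a', b'⟩ h
  by_cases hb : b = 0 <;> by_cases hb' : b' = 0 <;>
    simp only [paramLine, hb, hb', if_true, if_false, reduceCtorEq, Sum.inr.injEq,
      Sum.inl.injEq, Prod.mk.injEq, neg_inj] at h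
  · simp [h, hb, hb']
  · obtain ⟨rfl, h⟩ := h
    simp [mul_right_cancel₀ hb h]

lemma card_le_card_filter_incident_paramLine {A : Finset F} {a b : F} (ha : a ∈ A) (hb : b ∈ A) :
    #A ≤ #{p ∈ (A + A) ×ˢ (A * A) | Incident p (paramLine (a, b))} := by
  by_cases hb₀ : b = 0
  · subst hb₀
    calc #A ≤ #(A * A) := card_le_card_mul_self₀
      _ ≤ _ := by
        refine card_le_card_of_injOn (a, ·) (fun y hy => ?_) (fun y _ y' _ h => congrArg Prod.snd h)
        simpa [paramLine] using ⟨by simpa using add_mem_add ha hb, hy⟩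
  · refine card_le_card_of_injOn (fun c => (a + c, b * c)) (fun c hc => ?_)
      (fun c _ c' _ h => add_left_cancel (congrArg Prod.fst h))
    simp only [coe_filter, Set.mem_ofPred_eq, mem_product, paramLine, hb₀, if_false, incident_inl]
    exact ⟨⟨add_mem_add ha hc, mul_mem_mul hb hc⟩, by ring⟩

lemma card_pow_three_le_sum_card_incident (A : Finset F) :
    #A ^ 3 ≤ ∑ l ∈ (A ×ˢ A).image paramLine, #{p ∈ (A + A) ×ˢ (A * A) | Incident p l} := by
  rw [sum_image fun _ _ _ _ h => paramLine_injective h]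
  calc #A ^ 3 = #(A ×ˢ A) • #A := by rw [card_product, smul_eq_mul]; ring
    _ ≤ _ := card_nsmul_le_sum _ _ _ fun ab hab =>
      card_le_card_filter_incident_paramLine (mem_product.1 hab).1 (mem_product.1 hab).2

end PlaneLine

open PlaneLine in
theorem sum_product_estimate_general {F : Type*} [Field F] [Fintype F] [DecidableEq F]
    (q : ℕ) (hq : Fintype.card F = q)
    (A : Finset F) (hA : A.Nonempty) (m n : ℕ)
    (hm : m = (A + A).card) (hn : n = (A * A).card) :
    (A.card : ℝ) ^ 2 ≤ (m : ℝ) * n * A.card / q + Real.sqrt q * Real.sqrt ((m : ℝ) * n) := by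
  have hA₀ : (0 : ℝ) < #A := by exact_mod_cast hA.card_pos
  have lower : (#A : ℝ) ^ 3 ≤
      ∑ l ∈ (A ×ˢ A).image paramLine, (#{p ∈ (A + A) ×ˢ (A * A) | Incident p l} : ℝ) := by
    exact_mod_cast card_pow_three_le_sum_card_incident A
  have upper := sum_card_incident_le ((A + A) ×ˢ (A * A)) ((A ×ˢ A).image paramLine)
  rw [card_image_of_injective _ paramLine_injective, card_product, card_product, ← hm, ← hn,
    hq] at upper
  push_cast at upper
  have hsqrt : √(q * (m * n) * (#A * #A) : ℝ) = √q * √(m * n) * #A := by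
    rw [Real.sqrt_mul (by positivity), Real.sqrt_mul (by positivity), Real.sqrt_mul_self hA₀.le]
  rw [hsqrt] at upper
  refine le_of_mul_le_mul_right ?_ hA₀
  calc (#A : ℝ) ^ 2 * #A = #A ^ 3 := by ring
    _ ≤ m * n * (#A * #A) / q + √q * √(m * n) * #A := lower.trans upper
    _ = _ := by ring

/-- Sum-product estimate: for `A ⊆ F_q` nonempty, `q` odd,
`|A|² ≤ mn|A|/q + q^{1/2}√(mn)` where `m = |A+A|`, `n = |A·A|`. -/
theorem sum_product_estimate {F : Type*} [Field F] [Fintype F] [DecidableEq F]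
    (q : ℕ) (hq : Fintype.card F = q) (hodd : Odd q)
    (A : Finset F) (hA : A.Nonempty) (m n : ℕ)
    (hm : m = (A + A).card) (hn : n = (A * A).card) :
    (A.card : ℝ) ^ 2 ≤ (m : ℝ) * n * A.card / q + Real.sqrt q * Real.sqrt ((m : ℝ) * n) :=
  sum_product_estimate_general q hq A hA m n hm hn
end

section
/- Let A ⊆ F_q with q an odd prime power. Then max(|A+A|, |A·A|) ≥ 2|A|^2 / (q^{1/2} + √(q + 4|A|^3/q)). -/
/-!
Count the solutions of `p + q = r * s` with `p ∈ A + A`, `q ∈ -A`, `r ∈ A * A` and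
`s ∈ (A \ {0})⁻¹`: each `(a, b, c) ∈ (A \ {0}) × A × A` yields the solution
`(b + c, -c, a * b, a⁻¹)`, so there are at least `|A \ {0}| |A|²` of them. Expanding the count in
the additive characters `x ↦ ψ (t * x)`, the trivial character contributes
`|A + A| |A| |A * A| |A \ {0}| / q`, and Cauchy–Schwarz with Parseval bounds the others, as in
Vinh's point–line incidence bound. For `M = max |A + A| |A * A|` this gives
`|A|² ≤ |A| M² / q + √q M` (trivially when `|A| ≤ √q`), and solving this quadratic inequality
for `M` gives the bound.
-/

open Pointwise Finset

namespace SumProduct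

lemma two_mul_le_mul_add_sqrt_of_le_quadratic {a b c M : ℝ} (hc : 0 ≤ c)
    (hM : 0 ≤ M) (h : c ≤ a * M ^ 2 + b * M) : 2 * c ≤ M * (b + √(b ^ 2 + 4 * a * c)) := by
  suffices 2 * c - b * M ≤ M * √(b ^ 2 + 4 * a * c) by linarith
  rcases le_or_gt (2 * c - b * M) 0 with hneg | _
  · exact hneg.trans (by positivity)
  rw [show M * √(b ^ 2 + 4 * a * c) = √(M ^ 2 * (b ^ 2 + 4 * a * c)) by
    rw [Real.sqrt_mul (sq_nonneg M), Real.sqrt_sq hM]]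
  apply Real.le_sqrt_of_sq_le
  nlinarith [mul_le_mul_of_nonneg_left h hc]

variable {F : Type*} [Field F]

section Combinatorics

variable [DecidableEq F]

def addEqMulSolutions (P Q R S : Finset F) : Finset ((F × F) × F × F) :=
  ((P ×ˢ Q) ×ˢ R ×ˢ S).filter fun x => x.1.1 + x.1.2 = x.2.1 * x.2.2

lemma card_erase_zero_mul_sq_le_card_addEqMulSolutions (A : Finset F) :
    #(A.erase 0) * #A ^ 2 ≤ #(addEqMulSolutions (A + A) (-A) (A * A) (A.erase 0)⁻¹) := by
  rw [sq, ← card_product, ← card_product]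
  refine card_le_card_of_injOn
    (fun z : F × F × F => ((z.2.1 + z.2.2, -z.2.2), (z.1 * z.2.1, z.1⁻¹))) ?_ ?_
  · rintro ⟨a, b, c⟩ habc
    simp only [coe_product, Set.mem_prod, mem_coe] at habc
    obtain ⟨ha, hb, hc⟩ := habc
    have ha0 : a ≠ 0 := ne_of_mem_erase ha
    simp only [addEqMulSolutions, coe_filter, mem_product]
    refine ⟨⟨⟨add_mem_add hb hc, neg_mem_neg hc⟩, mul_mem_mul (mem_of_mem_erase ha) hb,
      inv_mem_inv ha⟩, ?_⟩
    field_simp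
    ring
  · rintro ⟨a, b, c⟩ habc ⟨a', b', c'⟩ - h
    simp only [Prod.mk.injEq] at h
    obtain ⟨⟨-, hc⟩, hb, ha⟩ := h
    obtain rfl : a = a' := inv_injective ha
    obtain rfl : c = c' := neg_injective hc
    obtain rfl : b = b' := mul_left_cancel₀ (ne_of_mem_erase (mem_product.1 habc).1) hb
    rfl

end Combinatorics

def charSum (ψ : AddChar F ℂ) (P : Finset F) (t : F) : ℂ := ∑ p ∈ P, ψ (t * p)

@[simp]
lemma charSum_zero (ψ : AddChar F ℂ) (P : Finset F) : charSum ψ P 0 = #P := by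
  simp [charSum]

variable [Fintype F] [DecidableEq F] {ψ : AddChar F ℂ}

lemma sum_norm_sq_charSum (hψ : ψ.IsPrimitive) (P : Finset F) :
    ∑ t, ‖charSum ψ P t‖ ^ 2 = Fintype.card F * #P := by
  have hexpand (t : F) : ((‖charSum ψ P t‖ ^ 2 : ℝ) : ℂ) = ∑ p ∈ P, ∑ p' ∈ P, ψ (t * (p - p')) := by
    push_cast
    rw [← Complex.mul_conj', charSum, map_sum, sum_mul_sum]
    refine sum_congr rfl fun p _ => sum_congr rfl fun p' _ => ?_
    rw [← AddChar.map_neg_eq_conj, ← AddChar.map_add_eq_mul, mul_sub, sub_eq_add_neg]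
  apply Complex.ofReal_injective
  push_cast [hexpand]
  rw [sum_comm]
  simp_rw [sum_comm (s := univ) (t := P), AddChar.sum_mulShift _ hψ, sub_eq_zero]
  simp [mul_comm]

lemma sum_erase_zero_norm_sq_charSum (hψ : ψ.IsPrimitive) (P : Finset F) :
    ∑ t ∈ univ.erase 0, ‖charSum ψ P t‖ ^ 2 = #P * (Fintype.card F - #P) := by
  rw [sum_erase_eq_sub (mem_univ 0), sum_norm_sq_charSum hψ, charSum_zero, Complex.norm_natCast]
  ring

lemma norm_bilinear_sum_le (hψ : ψ.IsPrimitive) {t : F} (ht : t ≠ 0) (R S : Finset F) :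
    ‖∑ r ∈ R, ∑ s ∈ S, ψ (t * (r * s))‖ ≤ √(Fintype.card F * #R * #S) := by
  have hrow (r : F) : ∑ s ∈ S, ψ (t * (r * s)) = charSum ψ S (t * r) := by
    simp only [charSum, mul_assoc]
  have hreindex : ∑ r, ‖charSum ψ S (t * r)‖ ^ 2 = Fintype.card F * #S := by
    rw [← sum_norm_sq_charSum hψ S]
    exact Fintype.sum_equiv (Equiv.mulLeft₀ t ht) _ _ fun _ => rfl
  calc ‖∑ r ∈ R, ∑ s ∈ S, ψ (t * (r * s))‖
      ≤ ∑ r ∈ R, ‖charSum ψ S (t * r)‖ := by simp_rw [hrow]; exact norm_sum_le _ _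
    _ ≤ √(#R * ∑ r ∈ R, ‖charSum ψ S (t * r)‖ ^ 2) :=
        Real.le_sqrt_of_sq_le (sq_sum_le_card_mul_sum_sq ..)
    _ ≤ √(#R * (Fintype.card F * #S)) := by
        gcongr
        rw [← hreindex]
        exact sum_le_sum_of_subset_of_nonneg (subset_univ R) fun _ _ _ => by positivity
    _ = √(Fintype.card F * #R * #S) := by ring_nf

lemma card_mul_card_addEqMulSolutions_eq_sum (hψ : ψ.IsPrimitive) (P Q R S : Finset F) :
    (Fintype.card F * #(addEqMulSolutions P Q R S) : ℂ) =
      ∑ t, charSum ψ P t * charSum ψ Q t * ∑ r ∈ R, ∑ s ∈ S, ψ (-t * (r * s)) := by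
  have hexpand (t : F) : charSum ψ P t * charSum ψ Q t * ∑ r ∈ R, ∑ s ∈ S, ψ (-t * (r * s)) =
      ∑ x ∈ (P ×ˢ Q) ×ˢ R ×ˢ S, ψ (t * (x.1.1 + x.1.2 - x.2.1 * x.2.2)) := by
    rw [charSum, charSum, sum_mul_sum, ← sum_product', ← sum_product', sum_mul_sum,
      ← sum_product']
    refine sum_congr rfl fun x _ => ?_
    rw [← AddChar.map_add_eq_mul, ← AddChar.map_add_eq_mul]
    ring_nf
  simp_rw [hexpand]
  rw [sum_comm]
  simp_rw [AddChar.sum_mulShift _ hψ, sub_eq_zero, addEqMulSolutions, natCast_card_filter,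
    mul_sum, mul_ite, mul_one, mul_zero, Nat.cast_ite, Nat.cast_zero]

lemma card_mul_card_addEqMulSolutions_le (hψ : ψ.IsPrimitive) (P Q R S : Finset F) :
    (Fintype.card F * #(addEqMulSolutions P Q R S) : ℝ) ≤ #P * #Q * #R * #S +
      √(Fintype.card F * #R * #S * (#P * (Fintype.card F - #P) *
        (#Q * (Fintype.card F - #Q)))) := by
  have hP : (#P : ℝ) ≤ Fintype.card F := mod_cast card_le_univ P
  have hQ : (#Q : ℝ) ≤ Fintype.card F := mod_cast card_le_univ Q
  set K : F → ℂ := fun t => ∑ r ∈ R, ∑ s ∈ S, ψ (-t * (r * s))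
  set B := √(Fintype.card F * #R * #S)
  have hK (t : F) (ht : t ≠ 0) : ‖K t‖ ≤ B := norm_bilinear_sum_le hψ (neg_ne_zero.2 ht) R S
  have herror : ((Fintype.card F * #(addEqMulSolutions P Q R S) - #P * #Q * #R * #S : ℝ) : ℂ) =
      ∑ t ∈ univ.erase 0, charSum ψ P t * charSum ψ Q t * K t := by
    have hid := card_mul_card_addEqMulSolutions_eq_sum hψ P Q R S
    have h0 : charSum ψ P 0 * charSum ψ Q 0 * K 0 = #P * #Q * #R * #S := by
      simp [K, mul_assoc]
    rw [← add_sum_erase _ _ (mem_univ 0), h0] at hid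
    push_cast
    linear_combination hid
  calc (Fintype.card F * #(addEqMulSolutions P Q R S) : ℝ)
      ≤ #P * #Q * #R * #S + ‖∑ t ∈ univ.erase 0, charSum ψ P t * charSum ψ Q t * K t‖ := by
        rw [← herror, Complex.norm_real, Real.norm_eq_abs]
        linarith [le_abs_self ((Fintype.card F * #(addEqMulSolutions P Q R S) -
          #P * #Q * #R * #S : ℝ))]
    _ ≤ #P * #Q * #R * #S + ∑ t ∈ univ.erase 0, B * (‖charSum ψ P t‖ * ‖charSum ψ Q t‖) := by
        gcongr
        refine norm_sum_le_of_le _ fun t ht => ?_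
        rw [norm_mul, norm_mul, mul_comm]
        gcongr
        exact hK t (ne_of_mem_erase ht)
    _ ≤ #P * #Q * #R * #S + B * (√(∑ t ∈ univ.erase 0, ‖charSum ψ P t‖ ^ 2) *
          √(∑ t ∈ univ.erase 0, ‖charSum ψ Q t‖ ^ 2)) := by
        rw [← mul_sum]
        gcongr
        exact Real.sum_mul_le_sqrt_mul_sqrt _ _ _
    _ = _ := by
        rw [sum_erase_zero_norm_sq_charSum hψ, sum_erase_zero_norm_sq_charSum hψ,
          ← Real.sqrt_mul (by nlinarith), ← Real.sqrt_mul (by positivity)]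

lemma card_mul_card_erase_zero_mul_sq_le (A : Finset F) :
    (Fintype.card F * (#(A.erase 0) * #A ^ 2) : ℝ) ≤ #(A + A) * #A * #(A * A) * #(A.erase 0) +
      √(Fintype.card F * #(A * A) * #(A.erase 0) *
        (#(A + A) * (Fintype.card F - #(A + A)) * (#A * (Fintype.card F - #A)))) := by
  have hcount : (#(A.erase 0) * #A ^ 2 : ℝ) ≤
      #(addEqMulSolutions (A + A) (-A) (A * A) (A.erase 0)⁻¹) :=
    mod_cast card_erase_zero_mul_sq_le_card_addEqMulSolutions A
  have hbound := card_mul_card_addEqMulSolutions_le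
    (AddChar.FiniteField.primitiveChar_to_Complex_isPrimitive F) (A + A) (-A) (A * A) (A.erase 0)⁻¹
  rw [card_neg, card_inv] at hbound
  nlinarith

lemma sq_card_le_of_sqrt_card_lt {A : Finset F} (hA : √(Fintype.card F : ℝ) < #A) :
    (#A : ℝ) ^ 2 ≤ #A / Fintype.card F * max (#(A + A) : ℝ) #(A * A) ^ 2 +
      √(Fintype.card F : ℝ) * max (#(A + A) : ℝ) #(A * A) := by
  have hcount := card_mul_card_erase_zero_mul_sq_le A
  have herase : (#A : ℝ) ≤ #(A.erase 0) + 1 := by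
    have := pred_card_le_card_erase (s := A) (a := 0)
    exact_mod_cast (by omega : #A ≤ #(A.erase 0) + 1)
  have hAq : (#A : ℝ) ≤ Fintype.card F := mod_cast card_le_univ A
  have hAP : (#A : ℝ) ≤ #(A + A) := mod_cast card_le_card_add_self
  have hPq : (#(A + A) : ℝ) ≤ Fintype.card F := mod_cast card_le_univ _
  have hq1 : (1 : ℝ) < Fintype.card F := mod_cast Fintype.one_lt_card
  set q : ℝ := (Fintype.card F : ℝ)
  set t : ℝ := (#A : ℝ)
  set t' : ℝ := (#(A.erase 0) : ℝ)
  set P : ℝ := (#(A + A) : ℝ)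
  set R : ℝ := (#(A * A) : ℝ)
  set M := max P R
  have hPM : P ≤ M := le_max_left P R
  have hRM : R ≤ M := le_max_right P R
  have hqt : q ≤ t ^ 2 := by
    nlinarith [Real.sq_sqrt (by linarith : 0 ≤ q), Real.sqrt_nonneg q]
  have ht' : 0 < t' := by nlinarith [Real.sqrt_nonneg q]
  -- from `q ≤ t ^ 2` and `t ≤ q`: `q ^ 2 + t ^ 3 ≤ 2 * q * t ^ 2`
  have hkey : t * (q - t) ^ 2 ≤ q ^ 2 * t' := by nlinarith
  have hmain : P * t * R * t' ≤ M ^ 2 * (t * t') := by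
    have hPR : P * R ≤ M ^ 2 := by rw [sq]; gcongr
    calc P * t * R * t' = P * R * (t * t') := by ring
      _ ≤ M ^ 2 * (t * t') := by gcongr
  have herror : √(q * R * t' * (P * (q - P) * (t * (q - t)))) ≤ M * q * t' * √q := by
    calc √(q * R * t' * (P * (q - P) * (t * (q - t))))
        ≤ √(M ^ 2 * q * t' * (t * (q - t) ^ 2)) := by
          apply Real.sqrt_le_sqrt
          calc q * R * t' * (P * (q - P) * (t * (q - t)))
              ≤ q * M * t' * (M * (q - t) * (t * (q - t))) := by
                gcongr
            _ = _ := by ring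
      _ ≤ √(M ^ 2 * q * t' * (q ^ 2 * t')) := by gcongr
      _ = M * q * t' * √q := by
          rw [show M ^ 2 * q * t' * (q ^ 2 * t') = (M * q * t') ^ 2 * q by ring,
            Real.sqrt_mul (sq_nonneg _), Real.sqrt_sq (by positivity)]
  have hbound : q * t' * t ^ 2 ≤ q * t' * (t / q * M ^ 2 + √q * M) := by
    have hexpand : q * t' * (t / q * M ^ 2 + √q * M) = M ^ 2 * (t * t') + M * q * t' * √q := by
      field_simp
    linarith
  exact le_of_mul_le_mul_left hbound (by positivity)

lemma sq_card_le (A : Finset F) :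
    (#A : ℝ) ^ 2 ≤ #A / Fintype.card F * max (#(A + A) : ℝ) #(A * A) ^ 2 +
      √(Fintype.card F : ℝ) * max (#(A + A) : ℝ) #(A * A) := by
  rcases lt_or_ge √(Fintype.card F : ℝ) #A with hA | hA
  · exact sq_card_le_of_sqrt_card_lt hA
  have hAM : (#A : ℝ) ≤ max (#(A + A) : ℝ) #(A * A) :=
    le_max_of_le_left (mod_cast card_le_card_add_self)
  calc (#A : ℝ) ^ 2 ≤ √(Fintype.card F : ℝ) * max (#(A + A) : ℝ) #(A * A) := by
        rw [sq]; gcongr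
    _ ≤ _ := le_add_of_nonneg_left (by positivity)

end SumProduct

theorem sum_product_lower_bound_general {F : Type*} [Field F] [Fintype F] [DecidableEq F]
    (q : ℕ) (hq : Fintype.card F = q) (A : Finset F) :
    2 * (A.card : ℝ) ^ 2 / (Real.sqrt q + Real.sqrt (q + 4 * (A.card : ℝ) ^ 3 / q))
      ≤ max ((A + A).card : ℝ) ((A * A).card : ℝ) := by
  subst hq
  have hcard : (0 : ℝ) < Fintype.card F := mod_cast Fintype.card_pos
  rw [div_le_iff₀ (by positivity)]
  have hdisc : √(Fintype.card F : ℝ) ^ 2 + 4 * (A.card / Fintype.card F) * (A.card : ℝ) ^ 2 =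
      Fintype.card F + 4 * (A.card : ℝ) ^ 3 / Fintype.card F := by
    rw [Real.sq_sqrt hcard.le]
    ring
  simpa only [hdisc] using SumProduct.two_mul_le_mul_add_sqrt_of_le_quadratic (by positivity)
    (by positivity) (SumProduct.sq_card_le A)

/-- Sum-product lower bound:
`max(|A+A|, |A·A|) ≥ 2|A|² / (q^{1/2} + √(q + 4|A|³/q))`. -/
theorem sum_product_lower_bound {F : Type*} [Field F] [Fintype F] [DecidableEq F]
    (q : ℕ) (hq : Fintype.card F = q) (hodd : Odd q) (A : Finset F) :
    2 * (A.card : ℝ) ^ 2 / (Real.sqrt q + Real.sqrt (q + 4 * (A.card : ℝ) ^ 3 / q))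
      ≤ max ((A + A).card : ℝ) ((A * A).card : ℝ) :=
  sum_product_lower_bound_general q hq A
end

section
/- There exists a constant c > 0 such that for all odd prime powers q and all sets A ⊆ F_q with q^{1/2} ≤ |A| ≤ q^{2/3}, one has max(|A+A|, |A·A|) ≥ c·|A|^2/q^{1/2}. -/
/-!
Garaev's incidence argument. For `a ∈ A \ {0}` and `b, c ∈ A`, the quadruple
`(p, x, c, s) = (ab, a⁻¹, c, b + c)` solves `p x + c = s` with `p ∈ A·A`, `x ∈ (A \ {0})⁻¹`,
`s ∈ A+A`, so this equation has at least `(|A| - 1)|A|²` solutions in `P × X × C × S`.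
Expanding the number of solutions in additive characters, the frequency `0` contributes
`|P||X||C||S|/q`; for `b ≠ 0` the factor `∑_{p ∈ P, x ∈ X} ψ(bpx)` is at most `√(q|P||X|)`
(Cauchy–Schwarz over `p`, then Parseval over the dilates `bp`), and Cauchy–Schwarz with Parseval
bounds the remaining two factors, so the other frequencies contribute at most
`√(q|P||X||C||S|)`. With `M = max(|A+A|, |A·A|)` this gives `|A|³ ≲ M²|A|²/q + √q |A| M`,
and `|A|³ ≤ q²` makes the first term too small to matter unless `M ≥ |A|²/(8√q)`.
-/

open Finset Pointwise

section

variable {F : Type*} [Field F]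

noncomputable def expSum (ψ : AddChar F ℂ) (s : Finset F) (b : F) : ℂ := ∑ x ∈ s, ψ (b * x)

@[simp] lemma expSum_zero (ψ : AddChar F ℂ) (s : Finset F) : expSum ψ s 0 = #s := by simp [expSum]

variable [DecidableEq F]

def incidences (P X C S : Finset F) : Finset ((F × F) × (F × F)) :=
  {t ∈ (P ×ˢ X) ×ˢ (C ×ˢ S) | t.1.1 * t.1.2 + t.2.1 = t.2.2}

lemma card_erase_zero_mul_le_card_incidences (A : Finset F) :
    #(A.erase 0) * #A * #A ≤ #(incidences (A * A) (A.erase 0)⁻¹ A (A + A)) := by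
  rw [← card_product, ← card_product]
  refine card_le_card_of_injOn (fun t => ((t.1.1 * t.1.2, t.1.1⁻¹), (t.2, t.1.2 + t.2))) ?_ ?_
  · rintro ⟨⟨a, b⟩, c⟩ ht
    simp only [coe_product, Set.mem_prod, mem_coe, mem_erase] at ht
    obtain ⟨⟨⟨ha0, ha⟩, hb⟩, hc⟩ := ht
    simp only [incidences, coe_filter, Set.mem_ofPred_eq, mem_product]
    refine ⟨⟨⟨mul_mem_mul ha hb, inv_mem_inv (mem_erase.2 ⟨ha0, ha⟩)⟩, hc, add_mem_add hb hc⟩, ?_⟩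
    rw [mul_comm a b, mul_assoc, mul_inv_cancel₀ ha0, mul_one]
  · rintro ⟨⟨a, b⟩, c⟩ ht ⟨⟨a', b'⟩, c'⟩ _ heq
    simp only [coe_product, Set.mem_prod, mem_coe, mem_erase] at ht
    simp only [Prod.mk.injEq] at heq
    obtain ⟨⟨hab, haa⟩, hcc, -⟩ := heq
    obtain rfl := inv_injective haa
    obtain rfl := mul_left_cancel₀ ht.1.1.1 hab
    rw [hcc]

variable [Fintype F] {ψ : AddChar F ℂ}

lemma card_filter_eq_zero_mul_card {ι : Type*} (hψ : ψ.IsPrimitive) (Ω : Finset ι) (f : ι → F) :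
    (#{i ∈ Ω | f i = 0} * Fintype.card F : ℂ) = ∑ b, ∑ i ∈ Ω, ψ (b * f i) := by
  rw [sum_comm]
  simp only [AddChar.sum_mulShift _ hψ, Nat.cast_ite, Nat.cast_zero, ← sum_filter, sum_const,
    nsmul_eq_mul]

lemma sum_norm_expSum_sq (hψ : ψ.IsPrimitive) (s : Finset F) :
    ∑ b, ‖expSum ψ s b‖ ^ 2 = Fintype.card F * #s := by
  have hdiag : #{t ∈ s ×ˢ s | t.1 - t.2 = 0} = #s := by
    simp_rw [sub_eq_zero]
    rw [← diag_eq_filter, diag_card]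
  have h := card_filter_eq_zero_mul_card hψ (s ×ˢ s) (fun t => t.1 - t.2)
  rw [hdiag] at h
  apply Complex.ofReal_injective
  push_cast
  rw [mul_comm, h]
  refine sum_congr rfl fun b _ => ?_
  rw [← Complex.mul_conj', expSum, map_sum, sum_mul_sum, sum_product]
  refine sum_congr rfl fun x _ => sum_congr rfl fun y _ => ?_
  rw [← AddChar.map_neg_eq_conj, ← AddChar.map_add_eq_mul]
  ring_nf

lemma norm_sum_expSum_mul_sq_le (hψ : ψ.IsPrimitive) {b : F} (hb : b ≠ 0) (P X : Finset F) :
    ‖∑ p ∈ P, expSum ψ X (b * p)‖ ^ 2 ≤ Fintype.card F * #P * #X := by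
  calc ‖∑ p ∈ P, expSum ψ X (b * p)‖ ^ 2 ≤ (∑ p ∈ P, ‖expSum ψ X (b * p)‖) ^ 2 := by
        gcongr; exact norm_sum_le _ _
    _ ≤ #P * ∑ p ∈ P, ‖expSum ψ X (b * p)‖ ^ 2 := sq_sum_le_card_mul_sum_sq
    _ = #P * ∑ u ∈ P.image (b * ·), ‖expSum ψ X u‖ ^ 2 := by
        rw [sum_image fun _ _ _ _ h => mul_left_cancel₀ hb h]
    _ ≤ #P * ∑ u, ‖expSum ψ X u‖ ^ 2 := by
        refine mul_le_mul_of_nonneg_left ?_ (by positivity)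
        exact sum_le_sum_of_subset_of_nonneg (subset_univ _) fun _ _ _ => by positivity
    _ = Fintype.card F * #P * #X := by rw [sum_norm_expSum_sq hψ]; ring

lemma card_incidences_mul_card (hψ : ψ.IsPrimitive) (P X C S : Finset F) :
    (#(incidences P X C S) * Fintype.card F : ℂ) =
      ∑ b, (∑ p ∈ P, expSum ψ X (b * p)) * expSum ψ C b * starRingEnd ℂ (expSum ψ S b) := by
  have h := card_filter_eq_zero_mul_card hψ ((P ×ˢ X) ×ˢ (C ×ˢ S))
    (fun t => t.1.1 * t.1.2 + t.2.1 - t.2.2)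
  simp_rw [sub_eq_zero] at h
  rw [incidences, h]
  refine sum_congr rfl fun b _ => ?_
  have hsplit : ∀ p x c s : F, ψ (b * (p * x + c - s)) =
      ψ (b * p * x) * ψ (b * c) * starRingEnd ℂ (ψ (b * s)) := fun p x c s => by
    rw [← AddChar.map_neg_eq_conj, ← AddChar.map_add_eq_mul, ← AddChar.map_add_eq_mul]
    ring_nf
  simp only [sum_product, hsplit, expSum, map_sum, ← mul_sum, ← sum_mul]

lemma norm_sum_expSum_erase_zero_le (hψ : ψ.IsPrimitive) (P X C S : Finset F) :
    ‖∑ b ∈ univ.erase 0,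
        (∑ p ∈ P, expSum ψ X (b * p)) * expSum ψ C b * starRingEnd ℂ (expSum ψ S b)‖ ≤
      √(Fintype.card F * #P * #X) * (√(Fintype.card F * #C) * √(Fintype.card F * #S)) := by
  set T := fun b => ∑ p ∈ P, expSum ψ X (b * p)
  have hT : ∀ b ∈ univ.erase (0 : F), ‖T b‖ ≤ √(Fintype.card F * #P * #X) := fun b hb =>
    Real.le_sqrt_of_sq_le (norm_sum_expSum_mul_sq_le hψ (ne_of_mem_erase hb) P X)
  calc _ ≤ ∑ b ∈ univ.erase 0, ‖T b‖ * (‖expSum ψ C b‖ * ‖expSum ψ S b‖) := by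
        refine (norm_sum_le _ _).trans_eq (sum_congr rfl fun b _ => ?_)
        rw [norm_mul, norm_mul, Complex.norm_conj, mul_assoc]
    _ ≤ ∑ b ∈ univ.erase 0, √(Fintype.card F * #P * #X) * (‖expSum ψ C b‖ * ‖expSum ψ S b‖) :=
        sum_le_sum fun b hb => mul_le_mul_of_nonneg_right (hT b hb) (by positivity)
    _ ≤ √(Fintype.card F * #P * #X) * ∑ b, ‖expSum ψ C b‖ * ‖expSum ψ S b‖ := by
        rw [← mul_sum]
        refine mul_le_mul_of_nonneg_left ?_ (by positivity)
        exact sum_le_sum_of_subset_of_nonneg (subset_univ _) fun _ _ _ => by positivity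
    _ ≤ _ := by
        refine mul_le_mul_of_nonneg_left ?_ (by positivity)
        rw [← sum_norm_expSum_sq hψ, ← sum_norm_expSum_sq hψ]
        exact Real.sum_mul_le_sqrt_mul_sqrt _ _ _

lemma card_incidences_le (P X C S : Finset F) :
    (#(incidences P X C S) : ℝ) ≤
      #P * #X * #C * #S / Fintype.card F + √(Fintype.card F * #P * #X * #C * #S) := by
  set q : ℝ := (Fintype.card F : ℝ)
  have hq : 0 < q := by positivity
  have hψ := AddChar.FiniteField.primitiveChar_to_Complex_isPrimitive F
  have hid := card_incidences_mul_card hψ P X C S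
  rw [← sum_erase_add _ _ (mem_univ 0)] at hid
  simp only [zero_mul, expSum_zero, sum_const, nsmul_eq_mul, map_natCast] at hid
  have herr := norm_sum_expSum_erase_zero_le hψ P X C S
  rw [eq_sub_iff_add_eq.mpr hid.symm] at herr
  have hsqrt : √(q * #P * #X) * (√(q * #C) * √(q * #S)) = q * √(q * #P * #X * #C * #S) := by
    rw [← Real.sqrt_mul (by positivity), ← Real.sqrt_mul (by positivity),
      show q * #P * #X * (q * #C * (q * #S)) = q ^ 2 * (q * #P * #X * #C * #S) by ring,
      Real.sqrt_mul (sq_nonneg q), Real.sqrt_sq hq.le]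
  have hreal : (#(incidences P X C S) : ℝ) * q - #P * #X * #C * #S ≤
      q * √(q * #P * #X * #C * #S) := by
    refine (le_abs_self _).trans (le_of_eq_of_le ?_ (herr.trans_eq hsqrt))
    rw [← Real.norm_eq_abs, ← Complex.norm_real]
    push_cast
    rfl
  rw [div_add' _ _ _ hq.ne', le_div_iff₀ hq]
  linarith

lemma sq_div_le_of_incidence_bound {a s M : ℝ} (ha : 2 ≤ a) (hs : 0 < s) (hM : 0 ≤ M)
    (hcube : a ^ 3 ≤ s ^ 4) (h : (a - 1) * a * a ≤ M * a * a * M / s ^ 2 + s * a * M) :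
    1 / 8 * a ^ 2 / s ≤ M := by
  by_contra! hlt
  have hsM : s * M < a ^ 2 / 8 := by
    rw [lt_div_iff₀ hs] at hlt; linarith
  have h1 : s * a * M < a ^ 3 / 8 := by nlinarith
  have h2 : M * a * a * M / s ^ 2 ≤ a ^ 3 / 64 := by
    rw [div_le_iff₀ (by positivity)]
    have hsq : (s * M) ^ 2 ≤ (a ^ 2 / 8) ^ 2 := pow_le_pow_left₀ (by positivity) hsM.le 2
    have h3 : (M * a * a * M) * s ^ 2 ≤ (a ^ 3 / 64 * s ^ 2) * s ^ 2 := by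
      have := mul_le_mul_of_nonneg_right hsq (sq_nonneg a)
      have := mul_le_mul_of_nonneg_left hcube (by positivity : 0 ≤ a ^ 3)
      nlinarith
    exact le_of_mul_le_mul_right h3 (by positivity)
  nlinarith

lemma le_max_card_add_card_mul (A : Finset F) (hlow : √(Fintype.card F) ≤ #A)
    (hupp : (#A : ℝ) ^ 3 ≤ (Fintype.card F : ℝ) ^ 2) :
    1 / 8 * (#A : ℝ) ^ 2 / √(Fintype.card F) ≤ max (#(A + A) : ℝ) #(A * A) := by
  set M := max (#(A + A) : ℝ) #(A * A)
  have hq : (1 : ℝ) < Fintype.card F := by exact_mod_cast Fintype.one_lt_card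
  have hs : 0 < √(Fintype.card F : ℝ) := by positivity
  have hsq : √(Fintype.card F : ℝ) ^ 2 = Fintype.card F := Real.sq_sqrt (by positivity)
  have ha : (2 : ℝ) ≤ #A := by
    have : (1 : ℝ) < #A := (Real.lt_sqrt zero_le_one |>.2 (by linarith)).trans_le hlow
    exact_mod_cast (by exact_mod_cast this : 1 < #A)
  have hlowN : ((#A : ℝ) - 1) * #A * #A ≤ #(incidences (A * A) (A.erase 0)⁻¹ A (A + A)) := by
    have herase : (#A : ℝ) - 1 ≤ #(A.erase 0) := by
      rw [sub_le_iff_le_add]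
      exact_mod_cast Nat.le_add_of_sub_le (pred_card_le_card_erase (s := A) (a := 0))
    calc ((#A : ℝ) - 1) * #A * #A ≤ #(A.erase 0) * #A * #A := by gcongr
      _ ≤ _ := by exact_mod_cast card_erase_zero_mul_le_card_incidences A
  have hX : (#(A.erase 0)⁻¹ : ℝ) ≤ #A := by rw [card_inv]; exact_mod_cast card_erase_le
  have hP : (#(A * A) : ℝ) ≤ M := le_max_right _ _
  have hS : (#(A + A) : ℝ) ≤ M := le_max_left _ _
  have hupN : (#(incidences (A * A) (A.erase 0)⁻¹ A (A + A)) : ℝ) ≤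
      M * #A * #A * M / √(Fintype.card F : ℝ) ^ 2 + √(Fintype.card F : ℝ) * #A * M := by
    refine (card_incidences_le _ _ _ _).trans ?_
    rw [hsq, show √(Fintype.card F : ℝ) * #A * M = √(Fintype.card F * M * #A * #A * M) by
      rw [show (Fintype.card F : ℝ) * M * #A * #A * M = (√(Fintype.card F : ℝ) * #A * M) ^ 2 by
        rw [mul_pow, mul_pow, hsq]; ring]
      exact (Real.sqrt_sq (by positivity)).symm]
    gcongr
  refine sq_div_le_of_incidence_bound ha hs (by positivity) ?_ (hlowN.trans hupN)
  rwa [show √(Fintype.card F : ℝ) ^ 4 = (Fintype.card F : ℝ) ^ 2 by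
    rw [show 4 = 2 * 2 from rfl, pow_mul, hsq]]

end

/-- There is `c > 0` such that for every odd prime power `q` and `A ⊆ F_q` with
`q^{1/2} ≤ |A| ≤ q^{2/3}`, `max(|A+A|, |A·A|) ≥ c |A|² / q^{1/2}`. -/
theorem sum_product_middle_range :
    ∃ c : ℝ, 0 < c ∧
      ∀ (F : Type) (_ : Field F) (_ : Fintype F) (_ : DecidableEq F) (A : Finset F),
        Odd (Fintype.card F) →
        ((Fintype.card F : ℝ) ^ ((1 : ℝ) / 2) ≤ (A.card : ℝ)) →
        ((A.card : ℝ) ≤ (Fintype.card F : ℝ) ^ ((2 : ℝ) / 3)) →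
        c * (A.card : ℝ) ^ 2 / Real.sqrt (Fintype.card F)
          ≤ max ((A + A).card : ℝ) ((A * A).card : ℝ) := by
  refine ⟨1 / 8, by norm_num, fun F _ _ _ A _ hlow hupp => le_max_card_add_card_mul A ?_ ?_⟩
  · rwa [Real.sqrt_eq_rpow]
  · calc (#A : ℝ) ^ 3 ≤ ((Fintype.card F : ℝ) ^ ((2 : ℝ) / 3)) ^ 3 := by gcongr
      _ = (Fintype.card F : ℝ) ^ 2 := by
        rw [← Real.rpow_natCast, ← Real.rpow_mul (by positivity)]; norm_num
end

section
/- Let q be a prime power and d ≥ 2. Let P be a set of points in F_q^d and H a set of hyperplanes in F_q^d. Then the number of incidences |{(p,h) ∈ P × H : p ∈ h}| is at most |P||H|/q + C·q^{(d−1)/2}·√(|P||H|) for some absolute constant C (one may take C = 2). -/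
open Finset

section Aux

variable {F : Type*} [Field F] [Fintype F] [DecidableEq F] {d : ℕ}

private lemma phi_fiber_card_eq (v : Fin d → F) (hv : v ≠ 0) (b : F) :
    (univ.filter fun a : Fin d → F => ∑ i, a i * v i = b).card
      = (univ.filter fun a : Fin d → F => ∑ i, a i * v i = 0).card := by
  obtain ⟨i₀, hi₀⟩ : ∃ i, v i ≠ 0 := by
    by_contra h; push_neg at h; exact hv (funext h)
  set c : Fin d → F := fun j => if j = i₀ then (v i₀)⁻¹ else 0 with hc
  have hcv : ∑ i, c i * v i = 1 := by
    rw [Finset.sum_eq_single i₀]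
    · simp [hc, inv_mul_cancel₀ hi₀]
    · intro j _ hj; simp [hc, hj]
    · simp
  have key : ∀ (a : Fin d → F) (t : F), ∑ i, (a + t • c) i * v i = (∑ i, a i * v i) + t := by
    intro a t
    simp only [Pi.add_apply, Pi.smul_apply, smul_eq_mul, add_mul, mul_assoc]
    rw [Finset.sum_add_distrib, ← Finset.mul_sum, hcv, mul_one]
  apply Finset.card_bij' (fun a _ => a + (-b) • c) (fun a _ => a + b • c)
  · intro a ha
    simp only [mem_filter, mem_univ, true_and] at ha ⊢
    rw [key, ha]; ring
  · intro a ha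
    simp only [mem_filter, mem_univ, true_and] at ha ⊢
    rw [key, ha]; ring
  · intro a _; funext j; simp
  · intro a _; funext j; simp

private lemma phi_ker_card (hd : 1 ≤ d) (v : Fin d → F) (hv : v ≠ 0) :
    (univ.filter fun a : Fin d → F => ∑ i, a i * v i = 0).card
      = Fintype.card F ^ (d - 1) := by
  set q := Fintype.card F with hqdef
  have hq : 0 < q := Fintype.card_pos
  have htot : (univ : Finset (Fin d → F)).card
      = ∑ b : F, (univ.filter fun a : Fin d → F => ∑ i, a i * v i = b).card :=
    Finset.card_eq_sum_card_fiberwise (fun x _ => mem_univ _)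
  rw [Finset.sum_congr rfl (fun b _ => phi_fiber_card_eq v hv b), Finset.sum_const, card_univ,
    Fintype.card_fun, Fintype.card_fin] at htot
  have h1 : q ^ d = q * (univ.filter fun a : Fin d → F => ∑ i, a i * v i = 0).card := by
    simpa [smul_eq_mul] using htot
  have hpow : q ^ d = q * q ^ (d - 1) := by
    rw [← pow_succ', Nat.sub_add_cancel hd]
  exact Nat.eq_of_mul_eq_mul_left hq (by rw [← h1, hpow])

private lemma pair_count (hd : 1 ≤ d) (p p' : Fin d → F) (hne : p ≠ p') :
    ((univ.filter fun a : Fin d → F => a ≠ 0).filter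
        (fun a => ∑ i, a i * p i = ∑ i, a i * p' i)).card
      = Fintype.card F ^ (d - 1) - 1 := by
  have hv : p - p' ≠ 0 := sub_ne_zero.mpr hne
  have hset : (univ.filter fun a : Fin d → F => a ≠ 0).filter
        (fun a => ∑ i, a i * p i = ∑ i, a i * p' i)
      = (univ.filter fun a : Fin d → F => ∑ i, a i * (p - p') i = 0).erase 0 := by
    ext a
    simp only [mem_filter, mem_univ, true_and, mem_erase, Pi.sub_apply, mul_sub,
      Finset.sum_sub_distrib, sub_eq_zero]
  rw [hset, card_erase_of_mem, phi_ker_card hd _ hv]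
  simp [mem_filter]

private def hyp (a : Fin d → F) (b : F) : Finset (Fin d → F) :=
  univ.filter (fun x => ∑ i, a i * x i = b)

private lemma hyp_smul {a : Fin d → F} {b : F} {l : F} (hl : l ≠ 0) :
    hyp (l • a) (l * b) = hyp a b := by
  ext x
  simp only [hyp, mem_filter, mem_univ, true_and, Pi.smul_apply, smul_eq_mul, mul_assoc,
    ← Finset.mul_sum]
  exact mul_right_inj' hl

private lemma hyp_fiber_lb (a : Fin d → F) (b : F) (ha : a ≠ 0) :
    Fintype.card F - 1 ≤
      ((((univ : Finset (Fin d → F)).filter (fun a' => a' ≠ 0)) ×ˢ (univ : Finset F)).filter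
        (fun ab => hyp ab.1 ab.2 = hyp a b)).card := by
  obtain ⟨i₀, hi₀⟩ : ∃ i, a i ≠ 0 := by
    by_contra h; push_neg at h; exact ha (funext h)
  have himg : ((univ : Finset F).erase 0).image (fun l => (l • a, l * b)) ⊆
      ((((univ : Finset (Fin d → F)).filter (fun a' => a' ≠ 0)) ×ˢ (univ : Finset F)).filter
        (fun ab => hyp ab.1 ab.2 = hyp a b)) := by
    intro ab hab
    simp only [mem_image, mem_erase, mem_univ, and_true] at hab
    obtain ⟨l, hl, rfl⟩ := hab
    simp only [mem_filter, mem_product, mem_filter, mem_univ, true_and, and_true]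
    exact ⟨smul_ne_zero hl ha, hyp_smul hl⟩
  have hinj : Set.InjOn (fun l : F => (l • a, l * b)) ((univ : Finset F).erase 0) := by
    intro l₁ _ l₂ _ h
    have := congrFun (congrArg Prod.fst h) i₀
    simp only [Pi.smul_apply, smul_eq_mul] at this
    exact mul_right_cancel₀ hi₀ this
  calc Fintype.card F - 1 = ((univ : Finset F).erase 0).card := by
        rw [card_erase_of_mem (mem_univ _), card_univ]
    _ = (((univ : Finset F).erase 0).image (fun l => (l • a, l * b))).card :=
        (Finset.card_image_of_injOn hinj).symm
    _ ≤ _ := Finset.card_le_card himg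

private lemma ind_sum (x y : F) :
    ∑ b : F, (if x = b then (1:ℝ) else 0) * (if y = b then 1 else 0)
      = if x = y then 1 else 0 := by
  rcases eq_or_ne x y with h | h
  · subst h
    simp [Finset.sum_ite_eq]
  · rw [if_neg h]
    apply Finset.sum_eq_zero
    intro b _
    rcases eq_or_ne x b with hb | hb
    · subst hb; rw [if_neg (fun hyb : y = x => h hyb.symm)]; ring
    · rw [if_neg hb]; ring

end Aux

/-- Point–hyperplane incidence bound in `F_q^d`, `d ≥ 2`:
`I(P,H) ≤ |P||H|/q + 2 q^{(d-1)/2} √(|P||H|)`. -/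
theorem point_hyperplane_incidences {F : Type*} [Field F] [Fintype F] [DecidableEq F]
    (q d : ℕ) (hq : Fintype.card F = q) (hd : 2 ≤ d)
    (P : Finset (Fin d → F)) (H : Finset (Finset (Fin d → F)))
    (hH : ∀ h ∈ H, ∃ (a : Fin d → F) (b : F), a ≠ 0 ∧
      h = Finset.univ.filter (fun x : Fin d → F => ∑ i, a i * x i = b)) :
    (((P ×ˢ H).filter (fun ph => ph.1 ∈ ph.2)).card : ℝ)
      ≤ (P.card : ℝ) * H.card / q
        + 2 * (q : ℝ) ^ (((d : ℝ) - 1) / 2) * Real.sqrt ((P.card : ℝ) * H.card) := by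
  classical
  have hd1 : 1 ≤ d := by omega
  have hq2 : 2 ≤ q := by rw [← hq]; exact Fintype.one_lt_card
  have hqR : (2:ℝ) ≤ (q:ℝ) := by exact_mod_cast hq2
  have hqpos : (0:ℝ) < (q:ℝ) := by linarith
  set Pc : ℝ := (P.card : ℝ) with hPc
  set Hc : ℝ := (H.card : ℝ) with hHc
  have hPc0 : 0 ≤ Pc := Nat.cast_nonneg _
  have hHc0 : 0 ≤ Hc := Nat.cast_nonneg _
  set X : ℝ := (q : ℝ) ^ (d - 1) with hX
  have hX1 : (1:ℝ) ≤ X := one_le_pow₀ (by linarith : (1:ℝ) ≤ (q:ℝ))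
  -- the counting functions
  set n : (Fin d → F) → F → ℕ :=
    fun a b => (P.filter (fun p => ∑ i, a i * p i = b)).card with hn
  set m : Finset (Fin d → F) → ℕ := fun h => (P.filter (fun p => p ∈ h)).card with hm
  have hmn : ∀ (a : Fin d → F) (b : F), m (hyp a b) = n a b := by
    intro a b
    simp only [hm, hn]
    congr 1
    ext p
    simp [hyp]
  -- Step A : incidences = ∑_{h ∈ H} m h
  have stepA : ((P ×ˢ H).filter (fun ph => ph.1 ∈ ph.2)).card = ∑ h ∈ H, m h := by
    rw [Finset.card_filter, Finset.sum_product, Finset.sum_comm]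
    exact Finset.sum_congr rfl (fun h _ => (Finset.card_filter _ _).symm)
  -- the main variance bound
  have key : ∑ h ∈ H, ((m h : ℝ) - Pc / q) ^ 2 ≤ Pc * X := by
    set A : Finset (Fin d → F) := univ.filter (fun a => a ≠ 0) with hA
    have cardA : A.card = q ^ d - 1 := by
      rw [hA, Finset.filter_ne', card_erase_of_mem (mem_univ _), card_univ, Fintype.card_fun,
        Fintype.card_fin, hq]
    set S2 : ℝ := ∑ a ∈ A, ∑ b : F, ((n a b : ℝ) - Pc / q) ^ 2 with hS2
    -- (1) (q-1) * LHS ≤ S2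
    have step1 : ((q:ℝ) - 1) * ∑ h ∈ H, ((m h : ℝ) - Pc / q) ^ 2 ≤ S2 := by
      set T : Finset ((Fin d → F) × F) :=
        (A ×ˢ (univ : Finset F)).filter (fun ab => hyp ab.1 ab.2 ∈ H) with hT
      have hmap : ∀ ab ∈ T, hyp ab.1 ab.2 ∈ H := fun ab hab => (mem_filter.mp hab).2
      have hfib : ∑ h ∈ H, ∑ ab ∈ T.filter (fun ab => hyp ab.1 ab.2 = h),
            ((m (hyp ab.1 ab.2) : ℝ) - Pc / q) ^ 2
          = ∑ ab ∈ T, ((m (hyp ab.1 ab.2) : ℝ) - Pc / q) ^ 2 :=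
        Finset.sum_fiberwise_of_maps_to hmap _
      have hfiblb : ∀ h ∈ H, ((q:ℝ) - 1) * ((m h : ℝ) - Pc / q) ^ 2
          ≤ ∑ ab ∈ T.filter (fun ab => hyp ab.1 ab.2 = h),
              ((m (hyp ab.1 ab.2) : ℝ) - Pc / q) ^ 2 := by
        intro h hh
        obtain ⟨a, b, ha, hab⟩ := hH h hh
        have hhyp : h = hyp a b := hab
        have hTfil : T.filter (fun ab => hyp ab.1 ab.2 = h)
            = (A ×ˢ (univ : Finset F)).filter (fun ab => hyp ab.1 ab.2 = hyp a b) := by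
          ext ab
          simp only [hT, Finset.filter_filter, mem_filter]
          constructor
          · rintro ⟨h1, _, h3⟩; exact ⟨h1, h3.trans hhyp⟩
          · rintro ⟨h1, h2⟩
            have e : hyp ab.1 ab.2 = h := h2.trans hhyp.symm
            exact ⟨h1, by rw [e]; exact hh, e⟩
        have hcard : q - 1 ≤ (T.filter (fun ab => hyp ab.1 ab.2 = h)).card := by
          rw [hTfil, ← hq]; exact hyp_fiber_lb a b ha
        have hsum : ∑ ab ∈ T.filter (fun ab => hyp ab.1 ab.2 = h),
              ((m (hyp ab.1 ab.2) : ℝ) - Pc / q) ^ 2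
            = ((T.filter (fun ab => hyp ab.1 ab.2 = h)).card : ℝ)
                * ((m h : ℝ) - Pc / q) ^ 2 := by
          rw [Finset.sum_congr rfl (fun ab hab => by
            rw [(mem_filter.mp hab).2]), Finset.sum_const, nsmul_eq_mul]
        rw [hsum]
        apply mul_le_mul_of_nonneg_right _ (sq_nonneg _)
        calc ((q:ℝ) - 1) = ((q - 1 : ℕ) : ℝ) := by
              rw [Nat.cast_sub (by omega)]; norm_num
          _ ≤ _ := by exact_mod_cast hcard
      calc ((q:ℝ) - 1) * ∑ h ∈ H, ((m h : ℝ) - Pc / q) ^ 2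
          = ∑ h ∈ H, ((q:ℝ) - 1) * ((m h : ℝ) - Pc / q) ^ 2 := Finset.mul_sum _ _ _
        _ ≤ ∑ h ∈ H, ∑ ab ∈ T.filter (fun ab => hyp ab.1 ab.2 = h),
              ((m (hyp ab.1 ab.2) : ℝ) - Pc / q) ^ 2 := Finset.sum_le_sum hfiblb
        _ = ∑ ab ∈ T, ((m (hyp ab.1 ab.2) : ℝ) - Pc / q) ^ 2 := hfib
        _ ≤ ∑ ab ∈ A ×ˢ (univ : Finset F), ((m (hyp ab.1 ab.2) : ℝ) - Pc / q) ^ 2 :=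
            Finset.sum_le_sum_of_subset_of_nonneg (Finset.filter_subset _ _)
              (fun _ _ _ => sq_nonneg _)
        _ = S2 := by
            rw [hS2, Finset.sum_product]
            exact Finset.sum_congr rfl (fun a _ => Finset.sum_congr rfl
              (fun b _ => by rw [hmn]))
    -- (2) S2 ≤ (q-1) * (Pc * X)
    have step2 : S2 ≤ ((q:ℝ) - 1) * (Pc * X) := by
      -- per-a computation
      have hbsum : ∀ a : Fin d → F, ∑ b : F, ((n a b : ℝ)) = Pc := by
        intro a
        have := Finset.card_eq_sum_card_fiberwise
          (f := fun p : Fin d → F => ∑ i, a i * p i) (s := P) (t := (univ : Finset F))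
          (fun x _ => mem_univ _)
        rw [hPc, this]
        push_cast
        rfl
      have hind : ∀ (a : Fin d → F) (b : F),
          (n a b : ℝ) = ∑ p ∈ P, (if ∑ i, a i * p i = b then (1:ℝ) else 0) := by
        intro a b
        show ((P.filter (fun p => ∑ i, a i * p i = b)).card : ℝ) = _
        rw [Finset.card_filter]
        push_cast
        rfl
      have hbsq : ∀ a : Fin d → F, ∑ b : F, ((n a b : ℝ)) ^ 2
          = ∑ p ∈ P, ∑ p' ∈ P,
              (if ∑ i, a i * p i = ∑ i, a i * p' i then (1:ℝ) else 0) := by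
        intro a
        have : ∀ b : F, ((n a b : ℝ)) ^ 2 = ∑ p ∈ P, ∑ p' ∈ P,
            (if ∑ i, a i * p i = b then (1:ℝ) else 0)
              * (if ∑ i, a i * p' i = b then (1:ℝ) else 0) := by
          intro b
          rw [hind a b, sq, Finset.sum_mul_sum]
        rw [Finset.sum_congr rfl (fun b _ => this b), Finset.sum_comm]
        apply Finset.sum_congr rfl
        intro p _
        rw [Finset.sum_comm]
        apply Finset.sum_congr rfl
        intro p' _
        exact ind_sum _ _
      have hVa : ∀ a : Fin d → F, ∑ b : F, ((n a b : ℝ) - Pc / q) ^ 2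
          = (∑ p ∈ P, ∑ p' ∈ P,
              (if ∑ i, a i * p i = ∑ i, a i * p' i then (1:ℝ) else 0)) - Pc ^ 2 / q := by
        intro a
        have expand : ∑ b : F, ((n a b : ℝ) - Pc / q) ^ 2
            = (∑ b : F, ((n a b : ℝ)) ^ 2) - 2 * (Pc / q) * (∑ b : F, ((n a b : ℝ)))
              + (q : ℝ) * (Pc / q) ^ 2 := by
          have : ∀ b : F, ((n a b : ℝ) - Pc / q) ^ 2
              = ((n a b : ℝ)) ^ 2 - 2 * (Pc / q) * (n a b : ℝ) + (Pc / q) ^ 2 := by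
            intro b; ring
          rw [Finset.sum_congr rfl (fun b _ => this b), Finset.sum_add_distrib,
            Finset.sum_sub_distrib, ← Finset.mul_sum, Finset.sum_const, card_univ, hq,
            nsmul_eq_mul]
        rw [expand, hbsq a, hbsum a]
        field_simp
        ring
      -- counting over a
      have hcount : ∀ p ∈ P, ∀ p' ∈ P,
          ∑ a ∈ A, (if ∑ i, a i * p i = ∑ i, a i * p' i then (1:ℝ) else 0)
            = if p = p' then ((q^d - 1 : ℕ) : ℝ) else ((q^(d-1) - 1 : ℕ) : ℝ) := by
        intro p _ p' _
        rcases eq_or_ne p p' with hpp | hpp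
        · subst hpp
          rw [if_pos rfl, Finset.sum_congr rfl (fun a _ => if_pos rfl), Finset.sum_const,
            nsmul_eq_mul, mul_one, cardA]
        · rw [if_neg hpp, Finset.sum_boole]
          norm_cast
          rw [← hq]
          exact pair_count hd1 p p' hpp
      set xR : ℝ := ((q^d - 1 : ℕ) : ℝ) with hxR
      set yR : ℝ := ((q^(d-1) - 1 : ℕ) : ℝ) with hyR
      have hinner : ∀ p ∈ P, ∑ p' ∈ P, (if p = p' then xR else yR) = (Pc - 1) * yR + xR := by
        intro p hp
        have hsplit : ∀ p' : Fin d → F, (if p = p' then xR else yR)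
            = yR + (if p = p' then xR - yR else 0) := by
          intro p'; split <;> ring
        rw [Finset.sum_congr rfl (fun p' _ => hsplit p'), Finset.sum_add_distrib,
          Finset.sum_const, Finset.sum_ite_eq P p (fun _ => xR - yR), if_pos hp,
          nsmul_eq_mul]
        ring
      have hS2eq : S2 = Pc * ((Pc - 1) * yR + xR) - xR * Pc ^ 2 / q := by
        rw [hS2, Finset.sum_congr rfl (fun a _ => hVa a), Finset.sum_sub_distrib,
          Finset.sum_const, cardA, nsmul_eq_mul]
        have hswap : ∑ a ∈ A, ∑ p ∈ P, ∑ p' ∈ P,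
            (if ∑ i, a i * p i = ∑ i, a i * p' i then (1:ℝ) else 0)
            = ∑ p ∈ P, ∑ p' ∈ P, ∑ a ∈ A,
              (if ∑ i, a i * p i = ∑ i, a i * p' i then (1:ℝ) else 0) := by
          rw [Finset.sum_comm]
          exact Finset.sum_congr rfl (fun p _ => Finset.sum_comm)
        rw [hswap, Finset.sum_congr rfl (fun p hp => Finset.sum_congr rfl
          (fun p' hp' => hcount p hp p' hp')),
          Finset.sum_congr rfl (fun p hp => hinner p hp), Finset.sum_const,
          nsmul_eq_mul, ← hPc]
        ring
      -- cast identities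
      have h1qd : 1 ≤ q ^ d := Nat.one_le_pow _ _ (by omega)
      have h1qd1 : 1 ≤ q ^ (d-1) := Nat.one_le_pow _ _ (by omega)
      have hqdX : ((q^d : ℕ) : ℝ) = (q:ℝ) * X := by
        have : q ^ d = q * q ^ (d-1) := by rw [← pow_succ', Nat.sub_add_cancel hd1]
        rw [this]; push_cast [hX]; ring
      have hxRe : xR = (q:ℝ) * X - 1 := by
        rw [hxR, Nat.cast_sub h1qd, hqdX]; norm_num
      have hyRe : yR = X - 1 := by
        rw [hyR, Nat.cast_sub h1qd1, hX]; push_cast; ring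
      have hq1 : (1:ℝ) / q ≤ 1 := by
        rw [div_le_one hqpos]; linarith
      have hfinal : S2 = ((q:ℝ) - 1) * (Pc * X) + Pc ^ 2 * (1 / q - 1) := by
        rw [hS2eq, hxRe, hyRe]
        field_simp
        ring
      rw [hfinal]
      nlinarith [sq_nonneg Pc]
    exact le_of_mul_le_mul_left (step1.trans step2) (by linarith : (0:ℝ) < (q:ℝ) - 1)
  -- Final assembly
  have hIeq : (((P ×ˢ H).filter (fun ph => ph.1 ∈ ph.2)).card : ℝ)
      = (∑ h ∈ H, ((m h : ℝ) - Pc / q)) + Hc * (Pc / q) := by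
    rw [stepA]
    push_cast
    rw [Finset.sum_sub_distrib, Finset.sum_const, nsmul_eq_mul]
    ring
  have hCS : ∑ h ∈ H, ((m h : ℝ) - Pc / q) ≤ Real.sqrt (Pc * Hc) * Real.sqrt X := by
    have h1 : (∑ h ∈ H, ((m h : ℝ) - Pc / q)) ^ 2
        ≤ Hc * (Pc * X) := by
      have := Finset.sum_mul_sq_le_sq_mul_sq H (fun _ => (1:ℝ))
        (fun h => ((m h : ℝ) - Pc / q))
      simp only [one_mul, one_pow] at this
      calc (∑ h ∈ H, ((m h : ℝ) - Pc / q)) ^ 2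
          ≤ (∑ _h ∈ H, (1:ℝ)) * ∑ h ∈ H, ((m h : ℝ) - Pc / q) ^ 2 := this
        _ = Hc * ∑ h ∈ H, ((m h : ℝ) - Pc / q) ^ 2 := by
            rw [Finset.sum_const, nsmul_eq_mul, mul_one]
        _ ≤ Hc * (Pc * X) := mul_le_mul_of_nonneg_left key hHc0
    calc ∑ h ∈ H, ((m h : ℝ) - Pc / q)
        ≤ |∑ h ∈ H, ((m h : ℝ) - Pc / q)| := le_abs_self _
      _ = Real.sqrt ((∑ h ∈ H, ((m h : ℝ) - Pc / q)) ^ 2) := (Real.sqrt_sq_eq_abs _).symm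
      _ ≤ Real.sqrt (Hc * (Pc * X)) := Real.sqrt_le_sqrt h1
      _ = Real.sqrt (Pc * Hc) * Real.sqrt X := by
          rw [show Hc * (Pc * X) = (Pc * Hc) * X by ring,
            Real.sqrt_mul (by positivity) X]
  have hsqX : Real.sqrt X = (q:ℝ) ^ (((d:ℝ) - 1) / 2) := by
    rw [hX, Real.sqrt_eq_rpow, ← Real.rpow_natCast (q:ℝ) (d-1),
      ← Real.rpow_mul (le_of_lt hqpos)]
    congr 1
    rw [Nat.cast_sub hd1]
    push_cast
    ring
  have hrpos : (0:ℝ) ≤ (q:ℝ) ^ (((d:ℝ) - 1) / 2) := Real.rpow_nonneg (le_of_lt hqpos) _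
  have hsnn : (0:ℝ) ≤ Real.sqrt (Pc * Hc) := Real.sqrt_nonneg _
  rw [hIeq]
  rw [hsqX] at hCS
  have : Hc * (Pc / q) = Pc * Hc / q := by ring
  nlinarith [mul_nonneg hrpos hsnn]
end
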